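/- Let X ⊆ ℝⁿ be a closed, convex, unbounded set. Then C∞X ∩ Sⁿ⁻¹ is nonempty, and for a linear map F : ℝⁿ → ℝᵐ, if F(v) ≠ 0 for every v ∈ C∞X with ‖v‖ = 1, then F(X) is closed. -/

import Mathlib

/-!
Let `F (a k) → p` with `a k ∈ X`. If `a` has a convergent subsequence, its limit lies in the
closed set `X` and is mapped to `p`. Otherwise `‖a k‖ → ∞`, and by compactness of the sphere the
normalized vectors `a k / ‖a k‖` accumulate at a unit vector `v` of the cone at infinity; but
`F (a k / ‖a k‖) = F (a k) / ‖a k‖ → 0`, so `F v = 0`, which is excluded.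
-/

open Filter Topology

noncomputable section

/-- The tangent cone at infinity (asymptotic cone) of a set `X ⊆ ℝⁿ`. -/
def coneAtInfty {n : ℕ} (X : Set (EuclideanSpace ℝ (Fin n))) :
    Set (EuclideanSpace ℝ (Fin n)) :=
  {v | ∃ (x : ℕ → EuclideanSpace ℝ (Fin n)) (t : ℕ → ℝ),
    (∀ k, x k ∈ X) ∧ (∀ k, 0 < t k) ∧
    Tendsto (fun k => ‖x k‖) atTop atTop ∧
    Tendsto (fun k => t k • x k) atTop (𝓝 v)}

section NormedSpace

variable {E G : Type*} [NormedAddCommGroup E]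

theorem tendsto_norm_atTop_or_exists_tendsto_subseq [ProperSpace E] (x : ℕ → E) :
    Tendsto (fun k => ‖x k‖) atTop atTop ∨
      ∃ y, ∃ φ : ℕ → ℕ, StrictMono φ ∧ Tendsto (x ∘ φ) atTop (𝓝 y) := by
  by_contra! h
  obtain ⟨C, hC⟩ : ∃ C, ∃ᶠ k in atTop, ‖x k‖ < C := by
    simpa only [tendsto_atTop, not_forall, not_eventually, not_le] using h.1
  obtain ⟨y, -, φ, hφ, hlim⟩ := tendsto_subseq_of_frequently_bounded
    (Metric.isBounded_ball (x := (0 : E)) (r := C)) (by simpa using hC)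
  exact h.2 y φ hφ hlim

variable [NormedSpace ℝ E]

theorem exists_tendsto_inv_norm_smul_subseq [ProperSpace E] {x : ℕ → E}
    (hx : Tendsto (fun k => ‖x k‖) atTop atTop) :
    ∃ v ∈ Metric.sphere (0 : E) 1, ∃ φ : ℕ → ℕ, StrictMono φ ∧
      Tendsto (fun k => ‖x (φ k)‖⁻¹ • x (φ k)) atTop (𝓝 v) := by
  have hsphere : ∀ᶠ k in atTop, ‖x k‖⁻¹ • x k ∈ Metric.sphere (0 : E) 1 := by
    filter_upwards [hx.eventually_gt_atTop 0] with k hk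
    exact mem_sphere_zero_iff_norm.2 (norm_smul_inv_norm (norm_pos_iff.1 hk))
  exact (isCompact_sphere (0 : E) 1).tendsto_subseq' hsphere.frequently

variable [NormedAddCommGroup G] [NormedSpace ℝ G]

theorem ContinuousLinearMap.map_eq_zero_of_tendsto_inv_norm_smul (F : E →L[ℝ] G)
    {x : ℕ → E} {p : G} {v : E} (hx : Tendsto (fun k => ‖x k‖) atTop atTop)
    (hFx : Tendsto (fun k => F (x k)) atTop (𝓝 p))
    (hv : Tendsto (fun k => ‖x k‖⁻¹ • x k) atTop (𝓝 v)) :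
    F v = 0 := by
  have hzero : Tendsto (fun k => F (‖x k‖⁻¹ • x k)) atTop (𝓝 0) := by
    simpa only [map_smul, zero_smul, Function.comp_def] using (tendsto_inv_atTop_zero.comp hx).smul hFx
  exact tendsto_nhds_unique ((F.continuous.tendsto v).comp hv) hzero

end NormedSpace

theorem mem_coneAtInfty_of_tendsto {n : ℕ} {X : Set (EuclideanSpace ℝ (Fin n))}
    {x : ℕ → EuclideanSpace ℝ (Fin n)} {v : EuclideanSpace ℝ (Fin n)} (hxX : ∀ k, x k ∈ X)
    (hx : Tendsto (fun k => ‖x k‖) atTop atTop)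
    (hv : Tendsto (fun k => ‖x k‖⁻¹ • x k) atTop (𝓝 v)) :
    v ∈ coneAtInfty X := by
  -- The definition asks for positive scalings at every index, so drop the terms with `x k = 0`.
  obtain ⟨N, hN⟩ := eventually_atTop.1 (hx.eventually_gt_atTop 0)
  exact ⟨fun k => x (k + N), fun k => ‖x (k + N)‖⁻¹, fun k => hxX _,
    fun k => inv_pos.2 (hN _ (Nat.le_add_left N k)),
    (tendsto_add_atTop_iff_nat N).2 hx, (tendsto_add_atTop_iff_nat N).2 hv⟩

theorem convex_coneAtInfty_closed_image_general {n m : ℕ}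
    (X : Set (EuclideanSpace ℝ (Fin n))) (hX : IsClosed X)
    (hub : ∀ R : ℝ, ∃ x ∈ X, R < ‖x‖) :
    (coneAtInfty X ∩ Metric.sphere 0 1).Nonempty ∧
    ∀ F : EuclideanSpace ℝ (Fin n) →ₗ[ℝ] EuclideanSpace ℝ (Fin m),
      (∀ v ∈ coneAtInfty X, ‖v‖ = 1 → F v ≠ 0) → IsClosed (F '' X) := by
  refine ⟨?_, fun F hF => ?_⟩
  · choose x hxX hx using fun k : ℕ => hub k
    have htop : Tendsto (fun k => ‖x k‖) atTop atTop :=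
      tendsto_atTop_mono (fun k => (hx k).le) tendsto_natCast_atTop_atTop
    obtain ⟨v, hv, φ, hφ, hlim⟩ := exists_tendsto_inv_norm_smul_subseq htop
    exact ⟨v, mem_coneAtInfty_of_tendsto (fun k => hxX _) (htop.comp hφ.tendsto_atTop) hlim, hv⟩
  · rw [← isSeqClosed_iff_isClosed]
    intro s p hs hp
    choose a haX haF using hs
    obtain rfl : s = fun k => F (a k) := funext fun k => (haF k).symm
    let F' := LinearMap.toContinuousLinearMap F
    rcases tendsto_norm_atTop_or_exists_tendsto_subseq a with htop | ⟨x, φ, hφ, hlim⟩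
    · obtain ⟨v, hv, φ, hφ, hlim⟩ := exists_tendsto_inv_norm_smul_subseq htop
      have htopφ := htop.comp hφ.tendsto_atTop
      exact absurd (F'.map_eq_zero_of_tendsto_inv_norm_smul htopφ (hp.comp hφ.tendsto_atTop) hlim)
        (hF v (mem_coneAtInfty_of_tendsto (fun k => haX _) htopφ hlim)
          (mem_sphere_zero_iff_norm.1 hv))
    · exact ⟨x, hX.mem_of_tendsto hlim (.of_forall fun k => haX _),
        tendsto_nhds_unique ((F'.continuous.tendsto x).comp hlim) (hp.comp hφ.tendsto_atTop)⟩

theorem convex_coneAtInfty_closed_image {n m : ℕ}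
    (X : Set (EuclideanSpace ℝ (Fin n))) (hX : IsClosed X) (hconv : Convex ℝ X)
    (hub : ∀ R : ℝ, ∃ x ∈ X, R < ‖x‖) :
    (coneAtInfty X ∩ Metric.sphere 0 1).Nonempty ∧
    ∀ F : EuclideanSpace ℝ (Fin n) →ₗ[ℝ] EuclideanSpace ℝ (Fin m),
      (∀ v ∈ coneAtInfty X, ‖v‖ = 1 → F v ≠ 0) → IsClosed (F '' X) :=
  convex_coneAtInfty_closed_image_general X hX hub
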